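/- Newton's inequality equality case: for real numbers x_1,…,x_n, if H_k² = H_{k+1}H_{k−1} and H_{k+1}H_{k-1} ≠ 0 pattern holds with all H_j > 0 for j ≤ k+1 (x in the positive cone), then equality H_k² = H_{k+1}H_{k−1} forces x_1 = ⋯ = x_n. -/

import Mathlib

/-- The `k`-th elementary symmetric polynomial of `x : Fin n → ℝ`. -/
noncomputable def esymmS (n : ℕ) (x : Fin n → ℝ) (k : ℕ) : ℝ :=
  ∑ A ∈ Finset.powersetCard k (Finset.univ : Finset (Fin n)), ∏ i ∈ A, x i

/-- The normalized `k`-th elementary symmetric function `H_k = S_k(x)/C(n,k)`. -/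
noncomputable def normH (n : ℕ) (x : Fin n → ℝ) (k : ℕ) : ℝ :=
  esymmS n x k / (n.choose k)

/-!
Appending a coordinate `t` to `y ∈ ℝⁿ` transforms the normalized symmetric functions by
`(n + 1) H_j(y, t) = (n + 1 - j) H_j(y) + j t H_{j-1}(y)`. Substituting this into the Newton gap
`H_{m+1}² - H_{m+2} H_m` expresses `(n + 1)²` times the gap of `(y, t)` as
`(H_{m+1}(y) - t H_m(y))²` plus nonnegative multiples of the gaps of `y` at `m` and `m - 1` and of
`H_{m+1}(y) H_m(y) - H_{m+2}(y) H_{m-1}(y)`, which is nonnegative as a product of two Newton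
inequalities for `y`. Induction on `n` gives Newton's inequalities. If the gap of `(y, t)` vanishes,
so do all these terms: a gap of `y` vanishes, hence `y` is constant by induction, and then the
square forces `t` to equal that constant.
-/

lemma Multiset.esymm_cons_succ {R : Type*} [CommSemiring R] (a : R) (s : Multiset R)
    (k : ℕ) : (a ::ₘ s).esymm (k + 1) = s.esymm (k + 1) + a * s.esymm k := by
  simp only [Multiset.esymm, Multiset.powersetCard_cons, Multiset.map_add, Multiset.sum_add,
    Multiset.map_map, Function.comp_def, Multiset.prod_cons, Multiset.sum_map_mul_left]

lemma esymmS_eq_esymm (n : ℕ) (x : Fin n → ℝ) (k : ℕ) :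
    esymmS n x k = (Finset.univ.val.map x).esymm k :=
  (Finset.esymm_map_val x _ k).symm

lemma esymmS_succ (n : ℕ) (x : Fin (n + 1) → ℝ) (k : ℕ) :
    esymmS (n + 1) x (k + 1) = esymmS n (x ∘ Fin.castSucc) (k + 1)
      + x (Fin.last n) * esymmS n (x ∘ Fin.castSucc) k := by
  have hcons : Finset.univ.val.map x
      = x (Fin.last n) ::ₘ Finset.univ.val.map (x ∘ Fin.castSucc) := by
    rw [Fin.univ_castSuccEmb, Finset.cons_val, Multiset.map_cons, Finset.map_val,
      Multiset.map_map]
    rfl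
  rw [esymmS_eq_esymm, esymmS_eq_esymm, esymmS_eq_esymm, hcons, Multiset.esymm_cons_succ]

lemma esymmS_eq_zero_of_lt {n k : ℕ} (x : Fin n → ℝ) (hk : n < k) : esymmS n x k = 0 := by
  rw [esymmS, Finset.powersetCard_eq_empty.2 (by simpa using hk), Finset.sum_empty]

lemma esymmS_pos {n k : ℕ} {x : Fin n → ℝ} (hx : ∀ i, 0 < x i) (hk : k ≤ n) :
    0 < esymmS n x k :=
  Finset.sum_pos (fun _ _ => Finset.prod_pos fun i _ => hx i)
    (Finset.powersetCard_nonempty_of_le (by simpa using hk))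

lemma normH_zero (n : ℕ) (x : Fin n → ℝ) : normH n x 0 = 1 := by
  simp [normH, esymmS]

lemma normH_pos {n k : ℕ} {x : Fin n → ℝ} (hx : ∀ i, 0 < x i) (hk : k ≤ n) :
    0 < normH n x k :=
  div_pos (esymmS_pos hx hk) (by exact_mod_cast Nat.choose_pos hk)

lemma normH_eq_zero_of_lt {n k : ℕ} (x : Fin n → ℝ) (hk : n < k) : normH n x k = 0 := by
  rw [normH, esymmS_eq_zero_of_lt x hk, zero_div]

lemma normH_nonneg {n : ℕ} {x : Fin n → ℝ} (hx : ∀ i, 0 < x i) (k : ℕ) :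
    0 ≤ normH n x k := by
  rcases le_or_gt k n with hk | hk
  · exact (normH_pos hx hk).le
  · exact (normH_eq_zero_of_lt x hk).ge

lemma esymmS_eq_normH_mul_choose (n : ℕ) (x : Fin n → ℝ) (k : ℕ) :
    esymmS n x k = normH n x k * n.choose k := by
  rcases le_or_gt k n with hk | hk
  · rw [normH, div_mul_cancel₀ _ (by exact_mod_cast (Nat.choose_pos hk).ne')]
  · rw [esymmS_eq_zero_of_lt x hk, normH_eq_zero_of_lt x hk, zero_mul]

lemma normH_const {n k : ℕ} (c : ℝ) (hk : k ≤ n) : normH n (fun _ => c) k = c ^ k := by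
  have hchoose : ((n.choose k : ℕ) : ℝ) ≠ 0 := by exact_mod_cast (Nat.choose_pos hk).ne'
  rw [normH, esymmS]
  simp only [Finset.prod_const]
  rw [Finset.sum_powersetCard, Finset.card_univ, Fintype.card_fin, nsmul_eq_mul,
    mul_div_cancel_left₀ _ hchoose]

lemma normH_succ (n : ℕ) (x : Fin (n + 1) → ℝ) (j : ℕ) :
    normH (n + 1) x j = ((n : ℝ) + 1 - j) / (n + 1) * normH n (x ∘ Fin.castSucc) j
      + j / (n + 1) * x (Fin.last n) * normH n (x ∘ Fin.castSucc) (j - 1) := by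
  rcases lt_or_ge (n + 1) j with hj | hj
  · rw [normH_eq_zero_of_lt x hj, normH_eq_zero_of_lt _ (by omega : n < j),
      normH_eq_zero_of_lt _ (by omega : n < j - 1)]
    ring
  rcases j with _ | j
  · have : (n : ℝ) + 1 ≠ 0 := by positivity
    simp [normH_zero, this]
  have hchoose : ((n + 1).choose (j + 1) : ℝ) ≠ 0 := by exact_mod_cast (Nat.choose_pos hj).ne'
  have hsucc_mul : (n.choose (j + 1) : ℝ) * (n + 1) = (n + 1).choose (j + 1) * (n - j) := by
    have h := congrArg (Nat.cast (R := ℝ)) (Nat.choose_mul_succ_eq n (j + 1))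
    push_cast [Nat.cast_sub (Nat.succ_le_succ_iff.mp hj)] at h
    linear_combination h
  have hsucc_mul' : ((n : ℝ) + 1) * n.choose j = (n + 1).choose (j + 1) * (j + 1) := by
    exact_mod_cast Nat.add_one_mul_choose_eq n j
  rw [normH, esymmS_succ, esymmS_eq_normH_mul_choose n _ (j + 1),
    esymmS_eq_normH_mul_choose n _ j, Nat.add_sub_cancel]
  push_cast
  field_simp
  linear_combination normH n (x ∘ Fin.castSucc) (j + 1) * hsucc_mul
    + x (Fin.last n) * normH n (x ∘ Fin.castSucc) j * hsucc_mul'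

lemma mul_le_mul_of_le_sq {α : Type*} [Field α] [LinearOrder α] [IsStrictOrderedRing α]
    {p q r s : α} (hq : 0 < q) (hr : 0 < r) (hs : 0 ≤ s)
    (hpr : p * r ≤ q ^ 2) (hqs : q * s ≤ r ^ 2) : p * s ≤ q * r := by
  nlinarith [mul_pos hq hr, mul_nonneg hq.le hs]

/-- `H_k² - H_{k+1} H_{k-1}` for `a = H`, indexed by `m = k - 1` so that no natural subtraction
occurs. -/
def newtonGap (a : ℕ → ℝ) (m : ℕ) : ℝ := a (m + 1) ^ 2 - a (m + 2) * a m

section Recurrence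

variable {N t : ℝ} {a b : ℕ → ℝ} {m : ℕ}

/-- At `m = 0` the truncated `m - 1` is harmless: every term containing it has the factor `m`. -/
lemma newtonGap_of_recurrence (hN : N ≠ 0)
    (hb : ∀ j, b j = (N - j) / N * a j + j / N * t * a (j - 1)) :
    N ^ 2 * newtonGap b m = (a (m + 1) - t * a m) ^ 2
      + (N - m) * ((N - m - 2) * newtonGap a m)
      + t * ((N - m - 2) * (m * (a (m + 1) * a m - a (m + 2) * a (m - 1))))
      + (m + 2) * t ^ 2 * (m * newtonGap a (m - 1)) := by
  have hgap_pred : (m : ℝ) * newtonGap a (m - 1) = m * (a m ^ 2 - a (m + 1) * a (m - 1)) := by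
    rcases m with _ | j
    · simp
    · simp [newtonGap, add_assoc]
  rw [hgap_pred, newtonGap, newtonGap, hb m, hb (m + 1), hb (m + 2)]
  simp only [Nat.add_sub_cancel, Nat.cast_add, Nat.cast_ofNat, Nat.cast_one,
    show m + 2 - 1 = m + 1 by omega]
  field_simp
  ring

lemma le_newtonGap_of_recurrence (hN : N ≠ 0) (ht : 0 ≤ t)
    (hb : ∀ j, b j = (N - j) / N * a j + j / N * t * a (j - 1))
    (hmN : (m : ℝ) + 2 ≤ N) (ha : ∀ j, 0 ≤ a j) (ham : 0 < a m) (ham' : 0 < a (m + 1))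
    (hgap : ∀ j, 0 ≤ newtonGap a j) :
    (a (m + 1) - t * a m) ^ 2 + (N - m) * ((N - m - 2) * newtonGap a m)
      + (m + 2) * t ^ 2 * (m * newtonGap a (m - 1)) ≤ N ^ 2 * newtonGap b m := by
  have hcross : 0 ≤ t * ((N - m - 2) * (m * (a (m + 1) * a m - a (m + 2) * a (m - 1)))) := by
    refine mul_nonneg ht (mul_nonneg (by linarith) ?_)
    rcases m with _ | j
    · simp
    · rw [Nat.add_sub_cancel]
      exact mul_nonneg (Nat.cast_nonneg _) (sub_nonneg.mpr
        (mul_le_mul_of_le_sq ham' ham (ha j) (sub_nonneg.mp (hgap (j + 1)))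
          (sub_nonneg.mp (hgap j))))
  rw [newtonGap_of_recurrence hN hb]
  linarith

lemma newtonGap_nonneg_of_recurrence (hN : N ≠ 0) (ht : 0 ≤ t)
    (hb : ∀ j, b j = (N - j) / N * a j + j / N * t * a (j - 1))
    (hmN : (m : ℝ) + 2 ≤ N) (ha : ∀ j, 0 ≤ a j) (ham : 0 < a m) (ham' : 0 < a (m + 1))
    (hgap : ∀ j, 0 ≤ newtonGap a j) : 0 ≤ newtonGap b m := by
  have key := le_newtonGap_of_recurrence hN ht hb hmN ha ham ham' hgap
  have h1 := sq_nonneg (a (m + 1) - t * a m)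
  have h2 := mul_nonneg (by linarith : 0 ≤ N - m)
    (mul_nonneg (by linarith : 0 ≤ N - m - 2) (hgap m))
  have h3 := mul_nonneg (by positivity : (0 : ℝ) ≤ (m + 2) * t ^ 2)
    (mul_nonneg (Nat.cast_nonneg m) (hgap (m - 1)))
  exact (mul_nonneg_iff_of_pos_left (by positivity : 0 < N ^ 2)).mp (by linarith)

lemma eq_of_newtonGap_eq_zero_of_recurrence (hN : N ≠ 0) (ht : 0 < t)
    (hb : ∀ j, b j = (N - j) / N * a j + j / N * t * a (j - 1))
    (hmN : (m : ℝ) + 2 ≤ N) (ha : ∀ j, 0 ≤ a j) (ham : 0 < a m) (ham' : 0 < a (m + 1))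
    (hgap : ∀ j, 0 ≤ newtonGap a j) (h0 : newtonGap b m = 0) :
    a (m + 1) = t * a m ∧ (N - m - 2) * newtonGap a m = 0 ∧ m * newtonGap a (m - 1) = 0 := by
  have key := le_newtonGap_of_recurrence hN ht.le hb hmN ha ham ham' hgap
  rw [h0, mul_zero] at key
  have h1 := sq_nonneg (a (m + 1) - t * a m)
  have h2 := mul_nonneg (by linarith : 0 ≤ N - m)
    (mul_nonneg (by linarith : 0 ≤ N - m - 2) (hgap m))
  have h3 := mul_nonneg (by positivity : (0 : ℝ) ≤ (m + 2) * t ^ 2)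
    (mul_nonneg (Nat.cast_nonneg m) (hgap (m - 1)))
  refine ⟨sub_eq_zero.mp (pow_eq_zero_iff two_ne_zero |>.mp (by linarith)), ?_, ?_⟩
  · exact (mul_eq_zero.mp (by linarith : (N - m) * _ = 0)).resolve_left (by linarith)
  · exact (mul_eq_zero.mp (by linarith : ((m : ℝ) + 2) * t ^ 2 * _ = 0)).resolve_left
      (by positivity)

end Recurrence

lemma newtonGap_normH_nonneg_of_lt {n m : ℕ} (x : Fin n → ℝ) (h : n < m + 2) :
    0 ≤ newtonGap (normH n x) m := by
  rw [newtonGap, normH_eq_zero_of_lt x h, zero_mul, sub_zero]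
  positivity

theorem newtonGap_normH_nonneg {n : ℕ} {x : Fin n → ℝ} (hx : ∀ i, 0 < x i) (m : ℕ) :
    0 ≤ newtonGap (normH n x) m := by
  induction n generalizing m with
  | zero => exact newtonGap_normH_nonneg_of_lt x (by omega)
  | succ n ih =>
    rcases lt_or_ge (n + 1) (m + 2) with hlt | hle
    · exact newtonGap_normH_nonneg_of_lt x hlt
    have hy : ∀ i, 0 < (x ∘ Fin.castSucc) i := fun i => hx _
    exact newtonGap_nonneg_of_recurrence (by positivity) (hx _).le
      (normH_succ n x) (by exact_mod_cast hle) (normH_nonneg hy)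
      (normH_pos hy (by omega)) (normH_pos hy (by omega)) (ih hy)

lemma eq_of_normH_succ_eq_mul {n m : ℕ} {y : Fin n → ℝ} (hy : ∀ i, 0 < y i)
    (hc : ∀ i j, y i = y j) (hm : m + 1 ≤ n) {t : ℝ}
    (h : normH n y (m + 1) = t * normH n y m) (i : Fin n) : y i = t := by
  have hconst : y = fun _ => y i := funext fun j => hc j i
  rw [hconst, normH_const _ hm, normH_const _ (by omega), pow_succ, mul_comm t] at h
  exact mul_left_cancel₀ (pow_pos (hy i) m).ne' h

theorem eq_of_newtonGap_normH_eq_zero {n m : ℕ} {x : Fin n → ℝ} (hx : ∀ i, 0 < x i)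
    (hm : m + 2 ≤ n) (h0 : newtonGap (normH n x) m = 0) : ∀ i j, x i = x j := by
  induction n generalizing m with
  | zero => omega
  | succ n ih =>
    have hy : ∀ i, 0 < (x ∘ Fin.castSucc) i := fun i => hx _
    obtain ⟨hlast, hgap_m, hgap_pred⟩ := eq_of_newtonGap_eq_zero_of_recurrence
      (by positivity) (hx _) (normH_succ n x) (by exact_mod_cast hm)
      (normH_nonneg hy) (normH_pos hy (by omega)) (normH_pos hy (by omega))
      (newtonGap_normH_nonneg hy) h0
    have hy_const : ∀ i j, (x ∘ Fin.castSucc) i = (x ∘ Fin.castSucc) j := by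
      rcases lt_or_ge (m + 2) (n + 1) with hlt | hge
      · refine ih hy (by omega) ((mul_eq_zero.mp hgap_m).resolve_left ?_)
        have : (m : ℝ) + 2 < n + 1 := by exact_mod_cast hlt
        linarith
      rcases m with _ | j
      · have : Subsingleton (Fin n) := Fin.subsingleton_iff_le_one.mpr (by omega)
        exact fun i j => congrArg _ (Subsingleton.elim i j)
      · exact ih hy (by omega) ((mul_eq_zero.mp hgap_pred).resolve_left (by positivity))
    have hx_last : ∀ i, x i = x (Fin.last n) :=
      Fin.lastCases rfl (eq_of_normH_succ_eq_mul hy hy_const (by omega) hlast)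
    exact fun i j => (hx_last i).trans (hx_last j).symm

theorem newton_equality_case_general (n k : ℕ) (hk1 : 1 ≤ k) (hk : k ≤ n - 1)
    (x : Fin n → ℝ) (hx : ∀ i, 0 < x i)
    (heq : (normH n x k) ^ 2 = normH n x (k + 1) * normH n x (k - 1)) :
    ∀ i j, x i = x j := by
  obtain ⟨m, rfl⟩ := Nat.exists_eq_add_of_le' hk1
  exact eq_of_newtonGap_normH_eq_zero hx (by omega) (sub_eq_zero.mpr heq)

/-- Equality case of Newton's inequality: for positive `x`, if
`H_k² = H_{k+1}·H_{k-1}` then all `x_i` are equal. -/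
theorem newton_equality_case (n k : ℕ) (hn : 2 ≤ n) (hk1 : 1 ≤ k) (hk : k ≤ n - 1)
    (x : Fin n → ℝ) (hx : ∀ i, 0 < x i)
    (heq : (normH n x k) ^ 2 = normH n x (k + 1) * normH n x (k - 1)) :
    ∀ i j, x i = x j :=
  newton_equality_case_general n k hk1 hk x hx heq
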